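/- Let ℓ be a positive integer and let φ ∈ S(ℝⁿ) satisfy condition (1.10). For integers j < k, define m̃_{k,j}(ξ) := φ̂(ξ) A_ℓ(2^{j-k}|ξ|) for ξ ∈ ℝⁿ. Then m̃_{k,j} is supported in {ξ : 1/2 ≤ |ξ| ≤ 2}, and for every multi-index β there exists a constant C, depending only on β, φ, n and ℓ (not on j, k), such that |∂^β m̃_{k,j}(ξ)| ≤ C 2^{2ℓ(j-k)} for all ξ ∈ ℝⁿ. -/

import Mathlib

open MeasureTheory Metric Finset
open scoped ENNReal SchwartzMap

/-- The Fourier transform `f̂(ξ) = ∫ f(x) e^{-i x·ξ} dx`. -/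
noncomputable def FT {n : ℕ} (f : EuclideanSpace ℝ (Fin n) → ℂ)
    (ξ : EuclideanSpace ℝ (Fin n)) : ℂ :=
  ∫ x, Complex.exp (-(Complex.I * ((inner ℝ x ξ : ℝ) : ℂ))) * f x

/-- Condition (1.10): `supp φ̂ ⊆ {1/2 ≤ |ξ| ≤ 2}` and `|φ̂| ≥ c > 0` on `{3/5 ≤ |ξ| ≤ 5/3}`. -/
def Cond110 {n : ℕ} (φ : 𝓢(EuclideanSpace ℝ (Fin n), ℂ)) : Prop :=
  (Function.support (FT ⇑φ) ⊆ {ξ : EuclideanSpace ℝ (Fin n) | 1/2 ≤ ‖ξ‖ ∧ ‖ξ‖ ≤ 2}) ∧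
    ∃ c : ℝ, 0 < c ∧ ∀ ξ : EuclideanSpace ℝ (Fin n), 3/5 ≤ ‖ξ‖ → ‖ξ‖ ≤ 5/3 → c ≤ ‖FT ⇑φ ξ‖

/-- `A_ℓ(s) := γ_n (4^ℓ/C(2ℓ,ℓ)) ∫_0^1 (1-u²)^{(n-1)/2} (sin(us/2))^{2ℓ} du`. -/
noncomputable def AFn (n ℓ : ℕ) (s : ℝ) : ℝ :=
  (∫ u in (0:ℝ)..1, (1 - u ^ 2) ^ (((n : ℝ) - 1) / 2))⁻¹ * ((4 : ℝ) ^ ℓ / ((2 * ℓ).choose ℓ : ℝ)) *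
    ∫ u in (0:ℝ)..1, (1 - u ^ 2) ^ (((n : ℝ) - 1) / 2) * Real.sin (u * s / 2) ^ (2 * ℓ)

/-- The partial derivative in the `i`-th coordinate direction. -/
noncomputable def pderivI {n : ℕ} (i : Fin n) (f : EuclideanSpace ℝ (Fin n) → ℂ) :
    EuclideanSpace ℝ (Fin n) → ℂ :=
  fun x => fderiv ℝ f x (EuclideanSpace.single i 1)

/-- The multi-index partial derivative `∂^β`. -/
noncomputable def pderivMulti {n : ℕ} (β : Fin n → ℕ)
    (f : EuclideanSpace ℝ (Fin n) → ℂ) : EuclideanSpace ℝ (Fin n) → ℂ :=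
  (List.finRange n).foldr (fun i g => (pderivI i)^[β i] g) f

/-- `m̃_{k,j}(ξ) := φ̂(ξ) A_ℓ(2^{j-k}|ξ|)`. -/
noncomputable def mTilde {n : ℕ} (ℓ : ℕ) (φ : 𝓢(EuclideanSpace ℝ (Fin n), ℂ)) (k j : ℤ)
    (ξ : EuclideanSpace ℝ (Fin n)) : ℂ :=
  FT ⇑φ ξ * ((AFn n ℓ ((2 : ℝ) ^ (j - k) * ‖ξ‖) : ℝ) : ℂ)

/-!
Since `sin x = x · sinc x`, `A_ℓ(s) = s^{2ℓ} H(s)` where `H` integrates a smooth kernel against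
a continuous weight and is therefore smooth. With `t = 2^{j-k} ∈ (0, 1]` this gives
`m̃_{k,j} = t^{2ℓ} Φ(t, ·)` for `Φ(τ, ξ) = φ̂(ξ) |ξ|^{2ℓ} H(τ|ξ|)`, which is jointly smooth because
`φ̂` vanishes near `ξ = 0`. Every `ξ`-derivative of `Φ` is jointly continuous and vanishes for
`|ξ| > 2`, so it is bounded on `[0, 1] × ℝⁿ` by compactness.
-/

open scoped ContDiff

namespace Real

theorem sin_eq_mul_sinc (x : ℝ) : sin x = x * sinc x := by
  rcases eq_or_ne x 0 with rfl | hx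
  · simp
  · rw [sinc_of_ne_zero hx, mul_div_cancel₀ _ hx]

theorem analyticAt_sinc (x : ℝ) : AnalyticAt ℝ sinc x := by
  rcases eq_or_ne x 0 with rfl | hx
  · obtain ⟨p, hp⟩ := analyticOnNhd_sin (0 : ℝ) (Set.mem_univ _)
    rw [sinc_eq_dslope]
    exact hp.has_fpower_series_dslope_fslope.analyticAt
  · have : (fun y => sin y / y) =ᶠ[nhds x] sinc :=
      Filter.eventually_of_mem (isOpen_ne.mem_nhds hx) fun y hy => (sinc_of_ne_zero hy).symm
    exact (analyticAt_sin.div analyticAt_id hx).congr this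

theorem contDiff_sinc : ContDiff ℝ ∞ sinc :=
  contDiff_iff_contDiffAt.2 fun x => (analyticAt_sinc x).contDiffAt

end Real

section ParametricIntegral

variable {w : ℝ → ℝ} {a b : ℝ}

theorem hasDerivAt_intervalIntegral_mul_of_contDiff (hw : Continuous w) {F : ℝ → ℝ → ℝ}
    (hF : ContDiff ℝ 1 (Function.uncurry F)) (s₀ : ℝ) :
    HasDerivAt (fun s => ∫ u in a..b, w u * F s u)
      (∫ u in a..b, w u * fderiv ℝ (Function.uncurry F) (s₀, u) (1, 0)) s₀ := by
  set F' : ℝ → ℝ → ℝ := fun s u => w u * fderiv ℝ (Function.uncurry F) (s, u) (1, 0)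
  have hF' : Continuous (Function.uncurry F') :=
    (hw.comp continuous_snd).mul ((hF.continuous_fderiv one_ne_zero).clm_apply continuous_const)
  obtain ⟨M, hM⟩ := ((isCompact_closedBall s₀ 1).prod (isCompact_uIcc (a := a) (b := b))
    ).exists_bound_of_continuousOn hF'.continuousOn
  have hpartial (s u : ℝ) :
      HasDerivAt (fun s => F s u) (fderiv ℝ (Function.uncurry F) (s, u) (1, 0)) s :=
    ((hF.differentiable one_ne_zero) (s, u)).hasFDerivAt.comp_hasDerivAt (x := s)
      (f := fun s => (s, u)) ((hasDerivAt_id s).prodMk (hasDerivAt_const s u))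
  have hslice (s : ℝ) : Continuous fun u => w u * F s u :=
    hw.mul (hF.continuous.comp (continuous_const.prodMk continuous_id))
  refine (intervalIntegral.hasDerivAt_integral_of_dominated_loc_of_deriv_le (μ := volume)
    (F := fun s u => w u * F s u) (F' := F') (bound := fun _ => M)
    (closedBall_mem_nhds s₀ one_pos) (.of_forall fun s => (hslice s).aestronglyMeasurable)
    ((hslice s₀).intervalIntegrable a b)
    (hF'.comp (continuous_const.prodMk continuous_id)).aestronglyMeasurable ?_
    intervalIntegrable_const ?_).2
  · exact .of_forall fun u hu s hs => hM (s, u) ⟨hs, Set.uIoc_subset_uIcc hu⟩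
  · exact .of_forall fun u _ s _ => (hpartial s u).const_mul (w u)

theorem contDiff_intervalIntegral_mul (hw : Continuous w) {F : ℝ → ℝ → ℝ}
    (hF : ContDiff ℝ ∞ (Function.uncurry F)) :
    ContDiff ℝ ∞ fun s => ∫ u in a..b, w u * F s u := by
  refine contDiff_infty.2 fun N => ?_
  induction N generalizing F with
  | zero =>
    exact contDiff_zero.2 (intervalIntegral.continuous_parametric_intervalIntegral_of_continuous'
      ((hw.comp continuous_snd).mul hF.continuous) a b)
  | succ N ih =>
    have hderiv := hasDerivAt_intervalIntegral_mul_of_contDiff (a := a) (b := b) hw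
      (hF.of_le (by exact_mod_cast le_top))
    push_cast
    refine contDiff_succ_iff_deriv.2
      ⟨fun s => (hderiv s).differentiableAt, fun h => (WithTop.coe_ne_top h).elim, ?_⟩
    rw [funext fun s => (hderiv s).deriv]
    exact ih (F := fun s u => fderiv ℝ (Function.uncurry F) (s, u) (1, 0))
      ((hF.fderiv_right le_rfl).clm_apply contDiff_const)

end ParametricIntegral

section FoldrIterate

theorem List.foldr_iterate_semiconj {α β ι : Type*} {g : α → β} {T : ι → α → α}
    {D : ι → β → β} (h : ∀ i, Function.Semiconj g (T i) (D i)) (L : List ι) (k : ι → ℕ)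
    (a : α) :
    g (L.foldr (fun i x => (T i)^[k i] x) a) = L.foldr (fun i y => (D i)^[k i] y) (g a) := by
  induction L with
  | nil => rfl
  | cons i L ih => rw [List.foldr_cons, List.foldr_cons, ← ih, ((h i).iterate_right (k i)).eq]

theorem List.foldr_iterate_mem {α ι : Type*} {S : Set α} {T : ι → α → α}
    (h : ∀ i, Set.MapsTo (T i) S S) (L : List ι) (k : ι → ℕ) {a : α} (ha : a ∈ S) :
    L.foldr (fun i x => (T i)^[k i] x) a ∈ S := by
  induction L with
  | nil => exact ha
  | cons i L ih => exact (h i).iterate (k i) ih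

end FoldrIterate

section SliceDerivatives

variable {n : ℕ}

noncomputable def pderivSnd (i : Fin n) (F : ℝ × EuclideanSpace ℝ (Fin n) → ℂ) :
    ℝ × EuclideanSpace ℝ (Fin n) → ℂ :=
  fun p => pderivI i (fun ξ => F (p.1, ξ)) p.2

noncomputable def pderivSndMulti (β : Fin n → ℕ) (F : ℝ × EuclideanSpace ℝ (Fin n) → ℂ) :
    ℝ × EuclideanSpace ℝ (Fin n) → ℂ :=
  (List.finRange n).foldr (fun i G => (pderivSnd i)^[β i] G) F

theorem pderivMulti_slice (β : Fin n → ℕ) (F : ℝ × EuclideanSpace ℝ (Fin n) → ℂ) (τ : ℝ) :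
    pderivMulti β (fun ξ => F (τ, ξ)) = fun ξ => pderivSndMulti β F (τ, ξ) :=
  (List.foldr_iterate_semiconj (g := fun (G : ℝ × EuclideanSpace ℝ (Fin n) → ℂ) ξ => G (τ, ξ))
    (T := pderivSnd) (D := pderivI) (fun _ _ => rfl) _ β F).symm

theorem pderivI_const_smul (i : Fin n) (c : ℝ) (f : EuclideanSpace ℝ (Fin n) → ℂ) :
    pderivI i (c • f) = c • pderivI i f := by
  ext x
  simp only [pderivI, fderiv_const_smul_field, Pi.smul_apply, FunLike.coe_smul]

theorem pderivMulti_const_smul (β : Fin n → ℕ) (c : ℝ) (f : EuclideanSpace ℝ (Fin n) → ℂ) :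
    pderivMulti β (c • f) = c • pderivMulti β f :=
  (List.foldr_iterate_semiconj (g := fun f => c • f) (T := pderivI) (D := pderivI)
    (fun i f => (pderivI_const_smul i c f).symm) _ β f).symm

theorem pderivSnd_eq_fderiv (i : Fin n) {F : ℝ × EuclideanSpace ℝ (Fin n) → ℂ}
    (hF : Differentiable ℝ F) (p : ℝ × EuclideanSpace ℝ (Fin n)) :
    pderivSnd i F p = fderiv ℝ F p (0, EuclideanSpace.single i 1) := by
  have h := (hF p).hasFDerivAt.comp p.2 (hasFDerivAt_prodMk_right (𝕜 := ℝ) p.1 p.2)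
  simp only [pderivSnd, pderivI, Function.comp_def] at h ⊢
  rw [h.fderiv]
  rfl

theorem ContDiff.pderivSnd (i : Fin n) {F : ℝ × EuclideanSpace ℝ (Fin n) → ℂ}
    (hF : ContDiff ℝ ∞ F) : ContDiff ℝ ∞ (pderivSnd i F) := by
  rw [funext (pderivSnd_eq_fderiv i (hF.differentiable (by simp)))]
  exact (hF.fderiv_right le_rfl).clm_apply contDiff_const

theorem Set.EqOn.pderivSnd (i : Fin n) {U : Set (ℝ × EuclideanSpace ℝ (Fin n))} (hU : IsOpen U)
    {F : ℝ × EuclideanSpace ℝ (Fin n) → ℂ} (hF : Set.EqOn F 0 U) :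
    Set.EqOn (pderivSnd i F) 0 U := by
  intro p hp
  have hslice : (fun ξ => F (p.1, ξ)) =ᶠ[nhds p.2] fun _ => 0 :=
    Filter.eventually_of_mem
      ((continuous_const.prodMk continuous_id).continuousAt.preimage_mem_nhds (hU.mem_nhds hp))
      fun ξ hξ => hF hξ
  change fderiv ℝ (fun ξ => F (p.1, ξ)) p.2 _ = 0
  rw [hslice.fderiv_eq, fderiv_const_apply]
  rfl

theorem ContDiff.pderivSndMulti_and_eqOn (β : Fin n → ℕ)
    {U : Set (ℝ × EuclideanSpace ℝ (Fin n))} (hU : IsOpen U)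
    {F : ℝ × EuclideanSpace ℝ (Fin n) → ℂ} (hF : ContDiff ℝ ∞ F)
    (hFU : Set.EqOn F 0 U) :
    ContDiff ℝ ∞ (pderivSndMulti β F) ∧ Set.EqOn (pderivSndMulti β F) 0 U :=
  List.foldr_iterate_mem (S := {G | ContDiff ℝ ∞ G ∧ Set.EqOn G 0 U})
    (fun i _ hG => ⟨hG.1.pderivSnd i, hG.2.pderivSnd i hU⟩) _ _ ⟨hF, hFU⟩

end SliceDerivatives

noncomputable def AFnDivPow (n ℓ : ℕ) (s : ℝ) : ℝ :=
  (∫ u in (0:ℝ)..1, (1 - u ^ 2) ^ (((n : ℝ) - 1) / 2))⁻¹ *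
    ((4 : ℝ) ^ ℓ / ((2 * ℓ).choose ℓ : ℝ)) *
    ∫ u in (0:ℝ)..1, (1 - u ^ 2) ^ (((n : ℝ) - 1) / 2) *
      ((u / 2) ^ (2 * ℓ) * Real.sinc (u * s / 2) ^ (2 * ℓ))

theorem AFn_eq_pow_mul_AFnDivPow (n ℓ : ℕ) (s : ℝ) :
    AFn n ℓ s = s ^ (2 * ℓ) * AFnDivPow n ℓ s := by
  have hsin (u : ℝ) : Real.sin (u * s / 2) ^ (2 * ℓ) =
      s ^ (2 * ℓ) * ((u / 2) ^ (2 * ℓ) * Real.sinc (u * s / 2) ^ (2 * ℓ)) := by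
    rw [Real.sin_eq_mul_sinc, ← mul_pow, ← mul_pow]
    ring_nf
  simp only [AFn, AFnDivPow, hsin, mul_left_comm _ (s ^ (2 * ℓ)),
    intervalIntegral.integral_const_mul]

theorem contDiff_AFnDivPow {n : ℕ} (hn : 1 ≤ n) (ℓ : ℕ) : ContDiff ℝ ∞ (AFnDivPow n ℓ) := by
  have hweight : Continuous fun u : ℝ => (1 - u ^ 2) ^ (((n : ℝ) - 1) / 2) :=
    (Real.continuous_rpow_const (div_nonneg (sub_nonneg.2 (by exact_mod_cast hn)) two_pos.le)).comp
      (by fun_prop)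
  refine contDiff_const.mul (contDiff_intervalIntegral_mul hweight ?_)
  exact (contDiff_snd.div_const 2).pow _ |>.mul
    ((Real.contDiff_sinc.comp ((contDiff_snd.mul contDiff_fst).div_const 2)).pow _)

open scoped FourierTransform in
theorem FT_eq_fourier {n : ℕ} (φ : 𝓢(EuclideanSpace ℝ (Fin n), ℂ))
    (ξ : EuclideanSpace ℝ (Fin n)) :
    FT ⇑φ ξ = 𝓕 (⇑φ) ((2 * Real.pi)⁻¹ • ξ) := by
  rw [Real.fourier_eq]
  refine integral_congr_ae (Filter.Eventually.of_forall fun x => ?_)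
  simp only [Circle.smul_def, Real.fourierChar_apply, smul_eq_mul, real_inner_smul_right]
  congr 2
  push_cast
  field_simp

theorem contDiff_FT {n : ℕ} (φ : 𝓢(EuclideanSpace ℝ (Fin n), ℂ)) : ContDiff ℝ ∞ (FT ⇑φ) := by
  rw [funext (FT_eq_fourier φ)]
  exact ((SchwartzMap.fourierTransformCLM ℂ φ).smooth ⊤).comp (contDiff_const_smul _)

section Profile

variable {n : ℕ} (ℓ : ℕ) (φ : 𝓢(EuclideanSpace ℝ (Fin n), ℂ))

noncomputable def mTildeProfile (p : ℝ × EuclideanSpace ℝ (Fin n)) : ℂ :=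
  FT ⇑φ p.2 * ((‖p.2‖ ^ (2 * ℓ) * AFnDivPow n ℓ (p.1 * ‖p.2‖) : ℝ) : ℂ)

theorem mTilde_eq_smul_mTildeProfile (k j : ℤ) :
    mTilde ℓ φ k j =
      ((2 : ℝ) ^ (j - k)) ^ (2 * ℓ) • fun ξ => mTildeProfile ℓ φ ((2 : ℝ) ^ (j - k), ξ) := by
  ext ξ
  simp only [mTilde, mTildeProfile, AFn_eq_pow_mul_AFnDivPow, Pi.smul_apply, Complex.real_smul]
  push_cast
  ring

variable {φ}

theorem mTildeProfile_eqOn_zero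
    (hφ : Function.support (FT ⇑φ) ⊆ {ξ : EuclideanSpace ℝ (Fin n) | 1/2 ≤ ‖ξ‖ ∧ ‖ξ‖ ≤ 2}) :
    Set.EqOn (mTildeProfile ℓ φ) 0 {p | 2 < ‖p.2‖} := by
  intro p hp
  have : FT ⇑φ p.2 = 0 := Function.notMem_support.1 fun h => (hφ h).2.not_gt hp
  simp [mTildeProfile, this]

theorem contDiff_mTildeProfile (hn : 1 ≤ n)
    (hφ : Function.support (FT ⇑φ) ⊆ {ξ : EuclideanSpace ℝ (Fin n) | 1/2 ≤ ‖ξ‖ ∧ ‖ξ‖ ≤ 2}) :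
    ContDiff ℝ ∞ (mTildeProfile ℓ φ) := by
  refine contDiff_iff_contDiffAt.2 fun p => ?_
  rcases eq_or_ne p.2 0 with hp | hp
  · -- `φ̂` vanishes near the origin, where `‖ξ‖` fails to be smooth
    refine (contDiffAt_const (c := (0 : ℂ))).congr_of_eventuallyEq ?_
    have hball : {q : ℝ × EuclideanSpace ℝ (Fin n) | ‖q.2‖ < 1 / 2} ∈ nhds p :=
      (isOpen_lt (continuous_norm.comp continuous_snd) continuous_const).mem_nhds (by simp [hp])
    refine Filter.eventually_of_mem hball fun q hq => ?_
    have : FT ⇑φ q.2 = 0 := Function.notMem_support.1 fun h => (hφ h).1.not_gt hq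
    simp [mTildeProfile, this]
  · have hnorm : ContDiffAt ℝ ∞ (fun q : ℝ × EuclideanSpace ℝ (Fin n) => ‖q.2‖) p :=
      (contDiffAt_norm ℝ hp).comp p contDiffAt_snd
    exact ((contDiff_FT φ).contDiffAt.comp p contDiffAt_snd).mul
      (Complex.ofRealCLM.contDiff.contDiffAt.comp p ((hnorm.pow _).mul
        ((contDiff_AFnDivPow hn ℓ).contDiffAt.comp p (contDiffAt_fst.mul hnorm))))

end Profile

theorem exists_bound_of_continuous_of_eqOn_zero {E F : Type*} [NormedAddCommGroup E]
    [ProperSpace E] [NormedAddCommGroup F] {G : ℝ × E → F} (hG : Continuous G) {R : ℝ}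
    (hGR : Set.EqOn G 0 {p | R < ‖p.2‖}) :
    ∃ C, 0 < C ∧ ∀ τ ∈ Set.Icc (0 : ℝ) 1, ∀ ξ, ‖G (τ, ξ)‖ ≤ C := by
  obtain ⟨C, hC⟩ := ((isCompact_Icc (a := (0 : ℝ)) (b := 1)).prod
    (isCompact_closedBall (0 : E) R)).exists_bound_of_continuousOn hG.continuousOn
  refine ⟨max C 1, by positivity, fun τ hτ ξ => ?_⟩
  by_cases hξ : ‖ξ‖ ≤ R
  · exact (hC (τ, ξ) ⟨hτ, mem_closedBall_zero_iff.2 hξ⟩).trans (le_max_left _ _)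
  · rw [hGR (not_le.1 hξ : R < ‖(τ, ξ).2‖), Pi.zero_apply, norm_zero]
    positivity

theorem stmt12_general (n : ℕ) (hn : 1 ≤ n) (ℓ : ℕ)
    (φ : 𝓢(EuclideanSpace ℝ (Fin n), ℂ)) (hφ : Cond110 φ) :
    (∀ k j : ℤ, j < k →
      Function.support (mTilde ℓ φ k j) ⊆
        {ξ : EuclideanSpace ℝ (Fin n) | 1/2 ≤ ‖ξ‖ ∧ ‖ξ‖ ≤ 2}) ∧
    ∀ β : Fin n → ℕ, ∃ C : ℝ, 0 < C ∧ ∀ k j : ℤ, j < k →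
      ∀ ξ : EuclideanSpace ℝ (Fin n),
        ‖pderivMulti β (mTilde ℓ φ k j) ξ‖ ≤ C * (2 : ℝ) ^ (2 * (ℓ : ℤ) * (j - k)) := by
  refine ⟨fun k j _ ξ hξ => hφ.1 fun h => hξ (by simp [mTilde, h]), fun β => ?_⟩
  obtain ⟨hG, hGU⟩ := (contDiff_mTildeProfile ℓ hn hφ.1).pderivSndMulti_and_eqOn β
    (isOpen_lt continuous_const (continuous_norm.comp continuous_snd))
    (mTildeProfile_eqOn_zero ℓ hφ.1)
  obtain ⟨C, hC, hbound⟩ := exists_bound_of_continuous_of_eqOn_zero hG.continuous hGU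
  refine ⟨C, hC, fun k j hjk ξ => ?_⟩
  have ht : (2 : ℝ) ^ (j - k) ∈ Set.Icc (0 : ℝ) 1 :=
    ⟨by positivity, zpow_le_one_of_nonpos₀ one_le_two (by omega)⟩
  rw [mTilde_eq_smul_mTildeProfile, pderivMulti_const_smul, pderivMulti_slice, Pi.smul_apply,
    norm_smul, Real.norm_of_nonneg (by positivity), mul_comm, ← zpow_natCast, ← zpow_mul]
  push_cast
  rw [mul_comm (j - k)]
  exact mul_le_mul_of_nonneg_right (hbound _ ht ξ) (by positivity)

/-- Let `ℓ ≥ 1` and let `φ` be Schwartz satisfying (1.10).  For integers `j < k` let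
`m̃_{k,j}(ξ) := φ̂(ξ) A_ℓ(2^{j-k}|ξ|)`.  Then `m̃_{k,j}` is supported in
`{1/2 ≤ |ξ| ≤ 2}` and, for every multi-index `β`, there is a constant `C = C(β,φ,n,ℓ)`
(independent of `j, k`) with `|∂^β m̃_{k,j}(ξ)| ≤ C 2^{2ℓ(j-k)}` for all `ξ`. -/
theorem stmt12 (n : ℕ) (hn : 1 ≤ n) (ℓ : ℕ) (hℓ : 0 < ℓ)
    (φ : 𝓢(EuclideanSpace ℝ (Fin n), ℂ)) (hφ : Cond110 φ) :
    (∀ k j : ℤ, j < k →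
      Function.support (mTilde ℓ φ k j) ⊆
        {ξ : EuclideanSpace ℝ (Fin n) | 1/2 ≤ ‖ξ‖ ∧ ‖ξ‖ ≤ 2}) ∧
    ∀ β : Fin n → ℕ, ∃ C : ℝ, 0 < C ∧ ∀ k j : ℤ, j < k →
      ∀ ξ : EuclideanSpace ℝ (Fin n),
        ‖pderivMulti β (mTilde ℓ φ k j) ξ‖ ≤ C * (2 : ℝ) ^ (2 * (ℓ : ℤ) * (j - k)) :=
  stmt12_general n hn ℓ φ hφ
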